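/- (Lower estimate of the inner-product sum, 0 ≤ q < 1) Suppose 0 ≤ q < 1. For all natural numbers r, s, r', s', k with r + s = r' + s' and r ≥ r', one has ∑_{i=0}^{r'} q^{(r-i)(r'-i) + k(r-i) + k(r'-i)}·[r']_q!·[s']_q!·binom(r,i)_q·binom(s,r'-i)_q ≥ C(q)^{-1}·q^{k(r-r')}·[r+s]_q!, where terms with i > r or r' - i > s vanish since the corresponding q-binomial coefficient is 0. -/

import Mathlib

/-- The q-integer `[n]_q = (1 - q^n)/(1 - q)`. -/
noncomputable def qInt (q : ℝ) (n : ℕ) : ℝ := (1 - q ^ n) / (1 - q)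

/-- The q-factorial `[n]_q! = [1]_q ⋯ [n]_q`, with `[0]_q! = 1`. -/
noncomputable def qFact (q : ℝ) : ℕ → ℝ
  | 0 => 1
  | n + 1 => qFact q n * qInt q (n + 1)

/-- The q-binomial coefficient `binom(n,m)_q`, with value `0` when `m > n`. -/
noncomputable def qBinom (q : ℝ) (n m : ℕ) : ℝ :=
  if m ≤ n then qFact q n / (qFact q m * qFact q (n - m)) else 0

/-- The constant `C(t) = ∏_{i=1}^∞ (1 - t^i)⁻¹` for `0 ≤ t < 1`. -/
noncomputable def Cconst (t : ℝ) : ℝ := ∏' i : ℕ, (1 - t ^ (i + 1))⁻¹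

/-!
Only the term `i = r'` of the sum is needed. It equals `q^{k(r-r')} [r]_q! [s']_q! / [r-r']_q!`,
and with `d = r - r'` and `s' = d + s` the claim reduces to `C(q)⁻¹ [d]_q! [r+s]_q! ≤ [r]_q! [d+s]_q!`.
This follows from `[r+s]_q! ≤ [r]_q! (1-q)^{-s}` (each `[n]_q ≤ (1-q)⁻¹`),
`C(q)⁻¹ ≤ ∏_{i<s} (1-q^{i+1}) = (1-q)^s [s]_q!` and `[d]_q! [s]_q! ≤ [d+s]_q!`.
-/

open Finset

lemma qFact_add (q : ℝ) (a m : ℕ) :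
    qFact q (a + m) = qFact q a * ∏ t ∈ range m, qInt q (a + t + 1) := by
  induction m with
  | zero => simp
  | succ m ih => rw [prod_range_succ, ← mul_assoc, ← ih]; rfl

lemma qFact_eq_prod (q : ℝ) (n : ℕ) : qFact q n = ∏ t ∈ range n, qInt q (t + 1) := by
  simpa [qFact] using qFact_add q 0 n

lemma qFact_mul_one_sub_pow {q : ℝ} (hq : q ≠ 1) (n : ℕ) :
    qFact q n * (1 - q) ^ n = ∏ t ∈ range n, (1 - q ^ (t + 1)) := by
  have hq' : 1 - q ≠ 0 := sub_ne_zero.2 hq.symm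
  rw [qFact_eq_prod, pow_eq_prod_const, ← prod_mul_distrib]
  exact prod_congr rfl fun t _ => div_mul_cancel₀ _ hq'

lemma qBinom_zero_right {q : ℝ} {n : ℕ} (h : qFact q n ≠ 0) : qBinom q n 0 = 1 := by
  simp [qBinom, qFact, h]

section UnitInterval

variable {q : ℝ} (hq₀ : 0 ≤ q) (hq₁ : q < 1)
include hq₀ hq₁

lemma qInt_pos {n : ℕ} (hn : n ≠ 0) : 0 < qInt q n :=
  div_pos (sub_pos.2 (pow_lt_one₀ hq₀ hq₁ hn)) (sub_pos.2 hq₁)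

lemma qInt_le_inv_one_sub (n : ℕ) : qInt q n ≤ (1 - q)⁻¹ := by
  rw [qInt, div_eq_mul_inv]
  exact mul_le_of_le_one_left (inv_nonneg.2 (sub_nonneg.2 hq₁.le))
    (sub_le_self _ (pow_nonneg hq₀ n))

lemma qInt_mono : Monotone (qInt q) := fun _ _ hmn =>
  div_le_div_of_nonneg_right (sub_le_sub_left (pow_le_pow_of_le_one hq₀ hq₁.le hmn) 1)
    (sub_nonneg.2 hq₁.le)

lemma qFact_pos (n : ℕ) : 0 < qFact q n := by
  induction n with
  | zero => exact one_pos
  | succ n ih => exact mul_pos ih (qInt_pos hq₀ hq₁ n.succ_ne_zero)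

lemma qBinom_nonneg (n m : ℕ) : 0 ≤ qBinom q n m := by
  unfold qBinom
  split_ifs
  · exact div_nonneg (qFact_pos hq₀ hq₁ n).le
      (mul_pos (qFact_pos hq₀ hq₁ m) (qFact_pos hq₀ hq₁ _)).le
  · exact le_rfl

lemma qFact_add_le (a m : ℕ) : qFact q (a + m) ≤ qFact q a * (1 - q)⁻¹ ^ m := by
  rw [qFact_add, pow_eq_prod_const]
  exact mul_le_mul_of_nonneg_left (prod_le_prod (fun t _ => (qInt_pos hq₀ hq₁ (by omega)).le)
    fun t _ => qInt_le_inv_one_sub hq₀ hq₁ _) (qFact_pos hq₀ hq₁ a).le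

lemma qFact_mul_qFact_le (a b : ℕ) : qFact q a * qFact q b ≤ qFact q (a + b) := by
  rw [qFact_add, qFact_eq_prod q b]
  exact mul_le_mul_of_nonneg_left (prod_le_prod (fun t _ => (qInt_pos hq₀ hq₁ (by omega)).le)
    fun t _ => qInt_mono hq₀ hq₁ (by omega)) (qFact_pos hq₀ hq₁ a).le

lemma multipliable_inv_one_sub_pow : Multipliable fun i : ℕ => (1 - q ^ (i + 1))⁻¹ := by
  have hq : 0 < 1 - q := sub_pos.2 hq₁
  have hsum : Summable fun i : ℕ => (1 - q ^ (i + 1))⁻¹ - 1 := by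
    refine Summable.of_nonneg_of_le (fun i => ?_) (fun i => ?_)
      ((summable_geometric_of_lt_one hq₀ hq₁).mul_left (q / (1 - q)))
    all_goals have hi : 1 - q ≤ 1 - q ^ (i + 1) :=
      sub_le_sub_left (pow_le_of_le_one hq₀ hq₁.le i.succ_ne_zero) 1
    · exact sub_nonneg.2 ((one_le_inv₀ (hq.trans_le hi)).2 (sub_le_self _ (pow_nonneg hq₀ _)))
    · calc (1 - q ^ (i + 1))⁻¹ - 1 = q ^ (i + 1) / (1 - q ^ (i + 1)) := by
            field_simp [(hq.trans_le hi).ne']; ring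
        _ ≤ q ^ (i + 1) / (1 - q) := by gcongr
        _ = q / (1 - q) * q ^ i := by ring
  simpa using Real.multipliable_one_add_of_summable hsum

lemma prod_range_inv_one_sub_pow_le_Cconst (n : ℕ) :
    ∏ i ∈ range n, (1 - q ^ (i + 1))⁻¹ ≤ Cconst q := by
  have hfactor : ∀ i : ℕ, 1 ≤ (1 - q ^ (i + 1))⁻¹ := fun i =>
    (one_le_inv₀ (sub_pos.2 (pow_lt_one₀ hq₀ hq₁ i.succ_ne_zero))).2
      (sub_le_self _ (pow_nonneg hq₀ _))
  have hmono : Monotone fun n => ∏ i ∈ range n, (1 - q ^ (i + 1))⁻¹ :=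
    monotone_nat_of_le_succ fun n => by
      rw [prod_range_succ]
      exact le_mul_of_one_le_right (prod_nonneg fun i _ => zero_le_one.trans (hfactor i))
        (hfactor n)
  exact hmono.ge_of_tendsto
    (multipliable_inv_one_sub_pow hq₀ hq₁).hasProd.tendsto_prod_nat n

lemma inv_Cconst_le_prod_range_one_sub_pow (n : ℕ) :
    (Cconst q)⁻¹ ≤ ∏ i ∈ range n, (1 - q ^ (i + 1)) := by
  refine inv_le_of_inv_le₀ (prod_pos fun i _ => ?_) ?_
  · exact sub_pos.2 (pow_lt_one₀ hq₀ hq₁ i.succ_ne_zero)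
  · rw [← prod_inv_distrib]
    exact prod_range_inv_one_sub_pow_le_Cconst hq₀ hq₁ n

lemma inv_Cconst_mul_qFact_mul_qFact_add_le (r d s : ℕ) :
    (Cconst q)⁻¹ * qFact q d * qFact q (r + s) ≤ qFact q r * qFact q (d + s) := by
  have hq : 0 < 1 - q := sub_pos.2 hq₁
  have hC : (Cconst q)⁻¹ ≤ qFact q s * (1 - q) ^ s := by
    rw [qFact_mul_one_sub_pow hq₁.ne]
    exact inv_Cconst_le_prod_range_one_sub_pow hq₀ hq₁ s
  have hd := (qFact_pos hq₀ hq₁ d).le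
  have hr := (qFact_pos hq₀ hq₁ r).le
  calc (Cconst q)⁻¹ * qFact q d * qFact q (r + s)
      ≤ qFact q s * (1 - q) ^ s * qFact q d * (qFact q r * (1 - q)⁻¹ ^ s) := by
        refine mul_le_mul (mul_le_mul_of_nonneg_right hC hd) (qFact_add_le hq₀ hq₁ r s)
          (qFact_pos hq₀ hq₁ _).le ?_
        exact mul_nonneg (mul_nonneg (qFact_pos hq₀ hq₁ s).le (pow_nonneg hq.le s)) hd
    _ = qFact q r * (qFact q d * qFact q s) := by
        rw [inv_pow]; field_simp
    _ ≤ qFact q r * qFact q (d + s) := by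
        gcongr
        exact qFact_mul_qFact_le hq₀ hq₁ d s

end UnitInterval

/-- Lower estimate of the inner-product sum for `0 ≤ q < 1`. -/
theorem inner_sum_lower_nonneg (q : ℝ) (hq₁ : 0 ≤ q) (hq₂ : q < 1)
    (r s r' s' k : ℕ) (hsum : r + s = r' + s') (hr : r' ≤ r) :
    (Cconst q)⁻¹ * q ^ (k * (r - r')) * qFact q (r + s) ≤
    ∑ i ∈ Finset.range (r' + 1),
      q ^ ((r - i) * (r' - i) + k * (r - i) + k * (r' - i)) *
        qFact q r' * qFact q s' * qBinom q r i * qBinom q s (r' - i) := by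
  have hterm_nonneg : ∀ i ∈ range (r' + 1),
      0 ≤ q ^ ((r - i) * (r' - i) + k * (r - i) + k * (r' - i)) *
        qFact q r' * qFact q s' * qBinom q r i * qBinom q s (r' - i) := fun i _ => by
    have := qFact_pos hq₁ hq₂ r'
    have := qFact_pos hq₁ hq₂ s'
    have := qBinom_nonneg hq₁ hq₂ r i
    have := qBinom_nonneg hq₁ hq₂ s (r' - i)
    positivity
  refine le_trans ?_ (single_le_sum hterm_nonneg (self_mem_range_succ r'))
  obtain ⟨d, rfl⟩ := Nat.exists_eq_add_of_le hr
  obtain rfl : s' = d + s := by omega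
  have hd := qFact_pos hq₁ hq₂ d
  have hterm : q ^ ((r' + d - r') * (r' - r') + k * (r' + d - r') + k * (r' - r')) *
      qFact q r' * qFact q (d + s) * qBinom q (r' + d) r' * qBinom q s (r' - r') =
      q ^ (k * d) * (qFact q (r' + d) * qFact q (d + s) / qFact q d) := by
    rw [Nat.sub_self, qBinom_zero_right (qFact_pos hq₁ hq₂ s).ne', qBinom,
      if_pos (Nat.le_add_right r' d), Nat.add_sub_cancel_left]
    field_simp [(qFact_pos hq₁ hq₂ r').ne']
    ring_nf
  rw [hterm, Nat.add_sub_cancel_left, mul_right_comm, mul_comm _ (q ^ _)]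
  gcongr
  rw [le_div_iff₀ hd, mul_right_comm]
  exact inv_Cconst_mul_qFact_mul_qFact_add_le hq₁ hq₂ (r' + d) d s
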